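/- arXiv:0805.2331 — 5 statements merged into one kernel-verified Lean document; each statement's English description precedes it below -/
import Mathlib

section
/- If H is an infinite subgroup of the group Aut_K K(x) of K-automorphisms of K(x), then the fixed field of H equals K. -/
/-!
If the fixed field `E` of `H` were larger than `K`, then `x` would be algebraic over `E`, since a
nonconstant `f = p/q ∈ E` makes `x` a root of `p - f q`. As `K(x) = E(x)`, the extension `K(x)/E`
would be finite, so its automorphism group, which contains `H`, would be finite.
-/

open IntermediateField

theorem IntermediateField.finite_of_finiteDimensional_fixedField {K L : Type*} [Field K] [Field L]
    [Algebra K L] (H : Subgroup (L ≃ₐ[K] L)) [FiniteDimensional (fixedField H) L] : Finite H :=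
  have : Finite (fixingSubgroup (fixedField H)) :=
    .of_equiv _ (fixingSubgroupEquiv _).symm.toEquiv
  .of_injective _ (Subgroup.inclusion_injective ((le_iff_le H _).mp le_rfl))

theorem RatFunc.finiteDimensional_of_ne_bot {K : Type*} [Field K]
    {E : IntermediateField K (RatFunc K)} (hE : E ≠ ⊥) : FiniteDimensional E (RatFunc K) :=
  have := adjoin.finiteDimensional (RatFunc.IntermediateField.isAlgebraic_X hE).isIntegral
  (RatFunc.IntermediateField.adjoinXEquiv E).toLinearEquiv.finiteDimensional

/-- The field fixed by an infinite group of `K`-automorphisms of `K(x)` is `K` itself. -/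
theorem fixedField_eq_bot_of_infinite {K : Type*} [Field K]
    (H : Subgroup (RatFunc K ≃ₐ[K] RatFunc K)) (hH : Infinite H) :
    IntermediateField.fixedField H = ⊥ := by
  by_contra hne
  have := RatFunc.finiteDimensional_of_ne_bot hne
  exact (finite_of_finiteDimensional_fixedField H).not_infinite hH
end

section
/- For any non-constant rational function f ∈ K(x), the order of the fixing group G_f = {u ∈ Aut_K K(x) : f ∘ u = f} divides deg f. -/
/-!
`K(x)` has degree `deg f` over `K(f)` (`RatFunc.finrank_eq_max_natDegree`), and the
`K`-automorphisms fixing `f` are exactly those fixing `K(f)`, i.e. `G = Aut(K(x)/K(f))`.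
By Artin's theorem `[K(x) : K(x)^G] = |G|`, so the tower
`K(f) ⊆ K(x)^G ⊆ K(x)` shows that `|G|` divides `[K(x) : K(f)]`.
-/

/-- The degree of a rational function: the maximum of the degrees of its
numerator and denominator (in lowest terms). -/
noncomputable def RatFunc.deg {K : Type*} [Field K] (f : RatFunc K) : ℕ :=
  max f.num.natDegree f.denom.natDegree

open IntermediateField Module

section

variable {F E : Type*} [Field F] [Field E] [Algebra F E]

theorem AlgEquiv.card_dvd_finrank : Nat.card Gal(E/F) ∣ finrank F E := by
  by_cases hfin : FiniteDimensional F E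
  · rw [← finrank_mul_finrank F (fixedField (⊤ : Subgroup Gal(E/F))) E,
      finrank_fixedField_eq_card, Subgroup.card_top]
    exact dvd_mul_left _ _
  · rw [finrank_of_not_finite hfin]
    exact dvd_zero _

theorem IntermediateField.fixingSubgroup_adjoin_simple (α : E) :
    F⟮α⟯.fixingSubgroup = MulAction.stabilizer Gal(E/F) α := by
  ext σ
  rw [← Subgroup.zpowers_le, ← le_iff_le, adjoin_simple_le_iff, mem_fixedField_iff,
    ← Subgroup.zpowers_le]
  exact Iff.rfl

theorem IntermediateField.card_stabilizer_dvd_finrank_adjoin_simple (α : E) :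
    Nat.card (MulAction.stabilizer Gal(E/F) α) ∣ finrank F⟮α⟯ E := by
  rw [← fixingSubgroup_adjoin_simple, Nat.card_congr (fixingSubgroupEquiv F⟮α⟯).toEquiv]
  exact AlgEquiv.card_dvd_finrank

end

theorem card_fixingGroup_dvd_deg_general {K : Type*} [Field K] (f : RatFunc K) :
    Nat.card {σ : RatFunc K ≃ₐ[K] RatFunc K // σ f = f} ∣ f.deg := by
  rw [RatFunc.deg, ← RatFunc.finrank_eq_max_natDegree]
  exact card_stabilizer_dvd_finrank_adjoin_simple f

/-- The order of the fixing group of a non-constant rational function `f`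
divides `deg f`. -/
theorem card_fixingGroup_dvd_deg {K : Type*} [Field K] (f : RatFunc K)
    (hf : f ∉ Set.range (algebraMap K (RatFunc K))) :
    Nat.card {σ : RatFunc K ≃ₐ[K] RatFunc K // σ f = f} ∣ f.deg :=
  card_fixingGroup_dvd_deg_general f
end

section
/- For f(x) = x²(x−1)² over any field K of characteristic ≠ 2, the fixing group G_f equals {x, 1−x}, so 1 < |G_f| < deg f. -/
/-- Functional composition of rational functions: `g.comp h = g ∘ h = g(h)`. -/
noncomputable def RatFunc.comp {K : Type*} [Field K] (g h : RatFunc K) : RatFunc K :=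
  RatFunc.eval (algebraMap K (RatFunc K)) h g

open Polynomial

section aux
variable {K : Type*} [Field K]

lemma aux_comp_eq (u : RatFunc K) :
    (RatFunc.X ^ 2 * (RatFunc.X - 1) ^ 2 : RatFunc K).comp u = u ^ 2 * (u - 1) ^ 2 := by
  have hfp : (RatFunc.X ^ 2 * (RatFunc.X - 1) ^ 2 : RatFunc K)
      = algebraMap K[X] (RatFunc K) (X ^ 2 * (X - 1) ^ 2) := by
    simp [map_mul, map_pow, map_sub, map_one, RatFunc.algebraMap_X]
  rw [RatFunc.comp, RatFunc.eval, hfp, RatFunc.num_algebraMap, RatFunc.denom_algebraMap]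
  simp only [eval₂_mul, eval₂_pow, eval₂_sub, eval₂_X, eval₂_one, Polynomial.eval₂_one]
  simp

lemma aux_deg_X : (RatFunc.X : RatFunc K).deg = 1 := by
  rw [RatFunc.deg, ← RatFunc.algebraMap_X, RatFunc.num_algebraMap, RatFunc.denom_algebraMap]
  simp

lemma aux_deg_one_sub_X : (1 - RatFunc.X : RatFunc K).deg = 1 := by
  have h : (1 - RatFunc.X : RatFunc K) = algebraMap K[X] (RatFunc K) (1 - X) := by
    simp [map_sub, map_one, RatFunc.algebraMap_X]
  rw [RatFunc.deg, h, RatFunc.num_algebraMap, RatFunc.denom_algebraMap]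
  have : (1 - X : K[X]) = -(X - C 1) := by simp
  rw [this, natDegree_neg, natDegree_X_sub_C]
  simp

lemma aux_deg_f : (RatFunc.X ^ 2 * (RatFunc.X - 1) ^ 2 : RatFunc K).deg = 4 := by
  have hfp : (RatFunc.X ^ 2 * (RatFunc.X - 1) ^ 2 : RatFunc K)
      = algebraMap K[X] (RatFunc K) (X ^ 2 * (X - 1) ^ 2) := by
    simp [map_mul, map_pow, map_sub, map_one, RatFunc.algebraMap_X]
  rw [RatFunc.deg, hfp, RatFunc.num_algebraMap, RatFunc.denom_algebraMap]
  have h4 : (X ^ 2 * (X - 1) ^ 2 : K[X]).natDegree = 4 := by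
    compute_degree!
  simp [h4]

lemma aux_X_ne (hchar : (2 : K) ≠ 0) : (RatFunc.X : RatFunc K) ≠ 1 - RatFunc.X := by
  intro h
  have h2 : (algebraMap K[X] (RatFunc K)) (X + X) = algebraMap K[X] (RatFunc K) 1 := by
    rw [map_add, map_one, RatFunc.algebraMap_X]
    linear_combination h
  have h3 := RatFunc.algebraMap_injective K h2
  have h4 := congrArg (fun p => coeff p 1) h3
  simp only [coeff_add, coeff_X, coeff_one] at h4
  norm_num at h4
  exact hchar (by linear_combination h4)

lemma aux_key (hchar : (2 : K) ≠ 0) (u : RatFunc K) (hdeg : u.deg = 1)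
    (h : u ^ 2 * (u - 1) ^ 2 = RatFunc.X ^ 2 * (RatFunc.X - 1) ^ 2) :
    u = RatFunc.X ∨ u = 1 - RatFunc.X := by
  set A := algebraMap K[X] (RatFunc K) with hA
  have hAinj : Function.Injective A := RatFunc.algebraMap_injective K
  set a := u.num with ha
  set b := u.denom with hb
  have hbne : (A b) ≠ 0 := RatFunc.algebraMap_ne_zero u.denom_ne_zero
  have hu : u = A a / A b := (RatFunc.num_div_denom u).symm
  have hpoly : a ^ 2 * (a - b) ^ 2 = X ^ 2 * (X - 1) ^ 2 * b ^ 4 := by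
    apply hAinj
    push_cast [map_mul, map_pow, map_sub, map_one]
    rw [RatFunc.algebraMap_X]
    have h' := h
    rw [hu] at h'
    field_simp at h'
    linear_combination h'
  have hcop : IsCoprime a b := u.isCoprime_num_denom
  have hcop2 : IsCoprime (a ^ 2 * (a - b) ^ 2) (b ^ 4) := by
    refine IsCoprime.pow_right (IsCoprime.mul_left ?_ ?_)
    · exact hcop.pow_left
    · refine IsCoprime.pow_left ?_
      have := hcop.add_mul_right_left (-1)
      simpa [sub_eq_add_neg] using this
  have hbone : b = 1 := by
    have hdvd : b ^ 4 ∣ a ^ 2 * (a - b) ^ 2 := ⟨X ^ 2 * (X - 1) ^ 2, by linear_combination hpoly⟩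
    have hunit : IsUnit (b ^ 4) := hcop2.isUnit_of_dvd' hdvd dvd_rfl
    exact u.monic_denom.eq_one_of_isUnit ((isUnit_pow_iff (by norm_num)).mp hunit)
  rw [hbone] at hpoly
  have hpa : a ^ 2 * (a - 1) ^ 2 = X ^ 2 * (X - 1) ^ 2 := by linear_combination hpoly
  have hfac : (a - X) * (a + X - 1) * (a ^ 2 - a + X ^ 2 - X) = 0 := by
    linear_combination hpa
  have hadeg : a.natDegree ≤ 1 := by
    have h' : max a.natDegree b.natDegree = 1 := hdeg
    omega
  rcases mul_eq_zero.mp hfac with hfac | hq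
  · rcases mul_eq_zero.mp hfac with h1 | h2
    · left
      rw [sub_eq_zero] at h1
      rw [hu, hbone, h1, map_one, div_one, hA]
      exact RatFunc.algebraMap_X
    · right
      have h1 : a = 1 - X := by linear_combination h2
      rw [hu, hbone, h1, map_one, div_one, map_sub, map_one, hA]
      rw [RatFunc.algebraMap_X]
  · exfalso
    obtain ⟨c, d, hcd⟩ := exists_eq_X_add_C_of_natDegree_le_one hadeg
    rw [hcd] at hq
    have hq' : C (c ^ 2 + 1) * X ^ 2 + C (2 * c * d - c - 1) * X + C (d ^ 2 - d) = 0 := by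
      simp only [map_add, map_sub, map_mul, map_pow, map_one, map_ofNat]
      linear_combination hq
    have h2 : c ^ 2 + 1 = 0 := by
      have := congrArg (fun p => coeff p 2) hq'
      simp only [coeff_add, coeff_C_mul, coeff_X_pow, coeff_X, coeff_C, coeff_zero] at this
      simpa using this
    have h1 : 2 * c * d - c - 1 = 0 := by
      have := congrArg (fun p => coeff p 1) hq'
      simp only [coeff_add, coeff_C_mul, coeff_X_pow, coeff_X, coeff_C, coeff_zero] at this
      simpa using this
    have h0 : d ^ 2 - d = 0 := by
      have := congrArg (fun p => coeff p 0) hq'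
      simp only [coeff_add, coeff_C_mul, coeff_X_pow, coeff_X, coeff_C, coeff_zero] at this
      simpa using this
    rcases mul_eq_zero.mp (show d * (d - 1) = 0 by linear_combination h0) with hd | hd
    · apply hchar
      have hd' : d = 0 := hd
      subst hd'
      linear_combination h2 + (c - 1) * h1
    · apply hchar
      have hd' : d = 1 := by linear_combination hd
      subst hd'
      linear_combination h2 - (c + 1) * h1

end aux

/-- For `f = x²(x-1)²` over a field of characteristic `≠ 2`, the fixing group
is `{x, 1-x}`; in particular `1 < |G_f| < deg f`. -/
theorem fixingGroup_x_sq_mul_x_sub_one_sq {K : Type*} [Field K] (hchar : (2 : K) ≠ 0)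
    (f : RatFunc K) (hf : f = RatFunc.X ^ 2 * (RatFunc.X - 1) ^ 2) :
    {u : RatFunc K | u.deg = 1 ∧ f.comp u = f} = {RatFunc.X, 1 - RatFunc.X} ∧
    1 < Set.ncard {u : RatFunc K | u.deg = 1 ∧ f.comp u = f} ∧
    Set.ncard {u : RatFunc K | u.deg = 1 ∧ f.comp u = f} < f.deg := by
  subst hf
  have hset : {u : RatFunc K | u.deg = 1 ∧
      (RatFunc.X ^ 2 * (RatFunc.X - 1) ^ 2 : RatFunc K).comp u
        = RatFunc.X ^ 2 * (RatFunc.X - 1) ^ 2}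
      = {RatFunc.X, 1 - RatFunc.X} := by
    ext u
    simp only [Set.mem_setOf_eq, Set.mem_insert_iff, Set.mem_singleton_iff, aux_comp_eq]
    constructor
    · rintro ⟨hdeg, heq⟩
      exact aux_key hchar u hdeg heq
    · rintro (rfl | rfl)
      · exact ⟨aux_deg_X, rfl⟩
      · refine ⟨aux_deg_one_sub_X, by ring⟩
  refine ⟨hset, ?_, ?_⟩
  · rw [hset, Set.ncard_pair (aux_X_ne hchar)]
    norm_num
  · rw [hset, Set.ncard_pair (aux_X_ne hchar), aux_deg_f]
    norm_num
end

section
/- If f ∈ K(x) is non-constant and |G_f| = deg f, then the extension K(f) ⊆ K(x) is normal; conversely, if K(f) ⊆ K(x) is separable and normal then |G_f| = deg f. -/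
open IntermediateField

namespace IntermediateField

variable {F E : Type*} [Field F] [Field E] [Algebra F E]

theorem fixingSubgroup_adjoin_simple_s9 (x : E) :
    fixingSubgroup F⟮x⟯ = MulAction.stabilizer (E ≃ₐ[F] E) x :=
  le_antisymm (fun _ hσ => hσ ⟨x, mem_adjoin_simple_self F x⟩)
    ((le_iff_le _ _).mp (adjoin_simple_le_iff.mpr fun σ => σ.2))

theorem card_stabilizer_eq_card_aut_adjoin_simple (x : E) :
    Nat.card {σ : E ≃ₐ[F] E // σ x = x} = Nat.card (E ≃ₐ[F⟮x⟯] E) := by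
  rw [← Nat.card_congr (fixingSubgroupEquiv F⟮x⟯).toEquiv, fixingSubgroup_adjoin_simple_s9]
  rfl

end IntermediateField

namespace RatFunc

variable {K : Type*} [Field K]

theorem finrank_adjoin_simple_eq_deg (f : RatFunc K) :
    Module.finrank K⟮f⟯ (RatFunc K) = f.deg :=
  finrank_eq_max_natDegree f

theorem deg_ne_zero {f : RatFunc K} (hf : f ∉ Set.range (algebraMap K (RatFunc K))) :
    f.deg ≠ 0 := by
  rw [deg, ne_eq, Nat.max_eq_zero_iff, ← eq_C_iff]
  rintro ⟨c, rfl⟩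
  exact hf ⟨c, rfl⟩

theorem finiteDimensional_adjoin_simple {f : RatFunc K}
    (hf : f ∉ Set.range (algebraMap K (RatFunc K))) : FiniteDimensional K⟮f⟯ (RatFunc K) :=
  Module.finite_of_finrank_pos <| by
    rw [finrank_adjoin_simple_eq_deg]
    exact Nat.pos_of_ne_zero (deg_ne_zero hf)

end RatFunc

/-- If `|G_f| = deg f` then `K(f) ⊆ K(x)` is normal; conversely, if the extension
`K(f) ⊆ K(x)` is separable and normal, then `|G_f| = deg f`. -/
theorem normal_iff_card_fixingGroup {K : Type*} [Field K] (f : RatFunc K)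
    (hf : f ∉ Set.range (algebraMap K (RatFunc K))) :
    (Nat.card {σ : RatFunc K ≃ₐ[K] RatFunc K // σ f = f} = f.deg →
      Normal (IntermediateField.adjoin K {f}) (RatFunc K)) ∧
    (Algebra.IsSeparable (IntermediateField.adjoin K {f}) (RatFunc K) →
      Normal (IntermediateField.adjoin K {f}) (RatFunc K) →
      Nat.card {σ : RatFunc K ≃ₐ[K] RatFunc K // σ f = f} = f.deg) := by
  have := RatFunc.finiteDimensional_adjoin_simple hf
  rw [card_stabilizer_eq_card_aut_adjoin_simple, ← RatFunc.finrank_adjoin_simple_eq_deg]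
  refine ⟨fun hcard => (IsGalois.of_card_aut_eq_finrank _ _ hcard).to_normal,
    fun hsep hnormal => ?_⟩
  have := isGalois_iff.mpr ⟨hsep, hnormal⟩
  exact IsGalois.card_aut_eq_finrank _ _
end

section
/- For every field K, the extension K ⊆ K(x) is Galois (i.e., the fixed field of Aut_K K(x) is exactly K) if and only if K is infinite. -/
open Polynomial
open scoped Polynomial.Bivariate

noncomputable section
variable {K : Type*} [Field K]

def laurentEquiv (r : K) : RatFunc K ≃ₐ[K] RatFunc K :=
  AlgEquiv.ofAlgHom (RatFunc.laurent r) (RatFunc.laurent (-r))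
    (AlgHom.ext fun f => by simp [RatFunc.laurent_laurent])
    (AlgHom.ext fun f => by simp [RatFunc.laurent_laurent])

theorem fixed_of_infinite [Infinite K] (x : RatFunc K)
    (hx : ∀ r : K, RatFunc.laurent r x = x) : x ∈ (⊥ : IntermediateField K (RatFunc K)) := by
  rcases eq_or_ne x 0 with rfl | hx0
  · exact zero_mem _
  set n := x.num with hn
  set d := x.denom with hd
  have hdK : ∀ r : K, taylor r n * d = n * taylor r d := by
    intro r
    have h1 : RatFunc.laurent r x =
        algebraMap K[X] (RatFunc K) (taylor r n) / algebraMap _ _ (taylor r d) := by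
      conv_lhs => rw [← RatFunc.num_div_denom x]
      exact RatFunc.laurent_div r n d
    rw [hx r] at h1
    conv_lhs at h1 => rw [← RatFunc.num_div_denom x]
    have hdann : algebraMap K[X] (RatFunc K) d ≠ 0 := RatFunc.algebraMap_ne_zero x.denom_ne_zero
    have htd : (taylor r d : K[X]) ≠ 0 := fun h => x.denom_ne_zero (by
      have := congrArg (taylor (-r)) h
      simpa [taylor_taylor] using this)
    have htd' : algebraMap K[X] (RatFunc K) (taylor r d) ≠ 0 := RatFunc.algebraMap_ne_zero htd
    rw [div_eq_div_iff hdann htd'] at h1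
    apply RatFunc.algebraMap_injective K
    push_cast [map_mul] at h1 ⊢
    linear_combination -h1
  -- pick s with n.eval s ≠ 0 and d.eval s ≠ 0
  have hnd : (n * d : K[X]) ≠ 0 := mul_ne_zero (RatFunc.num_ne_zero hx0) x.denom_ne_zero
  obtain ⟨s, hs⟩ : ∃ s : K, (n * d).eval s ≠ 0 := by
    by_contra h
    push_neg at h
    exact hnd (eq_zero_of_infinite_isRoot _ (Set.infinite_of_injective_forall_mem
      (f := fun k : K => k) Function.injective_id (fun k => h k)))
  rw [eval_mul, mul_ne_zero_iff] at hs
  set c := n.eval s / d.eval s with hc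
  have hg : taylor s n - C c * taylor s d = 0 := by
    apply eq_zero_of_infinite_isRoot
    apply Set.infinite_of_injective_forall_mem (f := fun k : K => k) Function.injective_id
    intro r
    have := congrArg (eval s) (hdK r)
    simp only [eval_mul, taylor_eval] at this
    obtain ⟨hs1, hs2⟩ := hs
    rw [add_comm s r] at this
    simp only [Set.mem_setOf_eq, IsRoot.def, eval_sub, eval_mul, eval_C, taylor_eval, hc]
    field_simp
    linear_combination this
  have hnc : n = C c * d := by
    have := congrArg (taylor (-s)) (sub_eq_zero.mp hg)
    rw [taylor_taylor, neg_add_cancel, taylor_zero] at this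
    rw [this, taylor_mul, taylor_C, taylor_taylor, neg_add_cancel, taylor_zero]
  rw [IntermediateField.mem_bot]
  refine ⟨c, ?_⟩
  rw [← RatFunc.num_div_denom x, ← hn, ← hd, hnc]
  rw [map_mul, mul_div_assoc, div_self (RatFunc.algebraMap_ne_zero x.denom_ne_zero), mul_one]
  rw [RatFunc.algebraMap_C]
  rfl

end

noncomputable section
variable {R : Type*} [CommRing R]

/-- The ring hom `R[X][Y] →+* R[X][Y]` swapping the two variables. -/
def swapHom : R[X][Y] →+* R[X][Y] :=
  eval₂RingHom (eval₂RingHom ((Polynomial.C (R := R[X])).comp (Polynomial.C (R := R)))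
    (Polynomial.X : R[X][Y])) (Polynomial.C (Polynomial.X : R[X]))

@[simp] theorem swapHom_CC (a : R) :
    swapHom (Polynomial.C (Polynomial.C a)) = Polynomial.C (Polynomial.C a) := by
  simp [swapHom]

@[simp] theorem swapHom_CX :
    swapHom (Polynomial.C (Polynomial.X : R[X])) = (Polynomial.X : R[X][Y]) := by
  simp [swapHom]

@[simp] theorem swapHom_X :
    swapHom (Polynomial.X : R[X][Y]) = Polynomial.C (Polynomial.X : R[X]) := by
  simp [swapHom]

theorem swapHom_swapHom (p : R[X][Y]) : swapHom (swapHom p) = p := by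
  have h : ((swapHom).comp (swapHom) : R[X][Y] →+* R[X][Y]) = RingHom.id _ := by
    apply Polynomial.ringHom_ext
    · intro q
      have h2 : (((swapHom).comp (swapHom)).comp (Polynomial.C) : R[X] →+* R[X][Y]) =
          (Polynomial.C : R[X] →+* R[X][Y]) := by
        apply Polynomial.ringHom_ext <;> simp
      exact DFunLike.congr_fun h2 q
    · simp
  exact DFunLike.congr_fun h p

theorem swapHom_injective : Function.Injective (swapHom (R := R)) :=
  Function.LeftInverse.injective swapHom_swapHom

theorem swapHom_C (p : R[X]) : swapHom (Polynomial.C p) = p.map Polynomial.C := by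
  have h2 : ((swapHom).comp (Polynomial.C) : R[X] →+* R[X][Y]) =
      (mapRingHom (Polynomial.C : R →+* R[X])) := by
    apply Polynomial.ringHom_ext <;> simp
  exact DFunLike.congr_fun h2 p

variable [IsDomain R]

theorem linear_irreducible {n d : R} (h : IsCoprime n d) (hd : d ≠ 0) :
    Irreducible (Polynomial.C n - Polynomial.C d * Polynomial.X) := by
  have hrw : Polynomial.C n - Polynomial.C d * Polynomial.X
      = Polynomial.C (-d) * Polynomial.X + Polynomial.C n := by rw [map_neg]; ring
  have hdegL : (Polynomial.C n - Polynomial.C d * Polynomial.X).natDegree = 1 := by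
    rw [hrw]; exact natDegree_linear (neg_ne_zero.mpr hd)
  have hc0 : (Polynomial.C n - Polynomial.C d * Polynomial.X).coeff 0 = n := by simp
  have hc1 : (Polynomial.C n - Polynomial.C d * Polynomial.X).coeff 1 = -d := by simp
  constructor
  · exact not_isUnit_of_natDegree_pos _ (by omega)
  · intro u v huv
    have hu0 : u ≠ 0 := by rintro rfl; simp at huv; rw [huv] at hdegL; simp at hdegL
    have hv0 : v ≠ 0 := by rintro rfl; simp at huv; rw [huv] at hdegL; simp at hdegL
    have hdeg : u.natDegree + v.natDegree = 1 := by
      rw [← natDegree_mul hu0 hv0, ← huv, hdegL]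
    have key : ∀ u v : R[X], Polynomial.C n - Polynomial.C d * Polynomial.X = u * v →
        v.natDegree = 0 → IsUnit v := by
      intro u v huv hv
      obtain ⟨r, rfl⟩ : ∃ r, v = Polynomial.C r := ⟨v.coeff 0, eq_C_of_natDegree_eq_zero hv⟩
      rw [isUnit_C]
      have hdvd : Polynomial.C r ∣ Polynomial.C n - Polynomial.C d * Polynomial.X :=
        Dvd.intro_left u huv.symm
      rw [C_dvd_iff_dvd_coeff] at hdvd
      have h0 := hdvd 0
      have h1 := hdvd 1
      rw [hc0] at h0
      rw [hc1] at h1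
      exact h.isUnit_of_dvd' h0 ((dvd_neg).mp h1)
    rcases Nat.eq_zero_or_pos u.natDegree with hu | hu
    · exact Or.inl (key v u (by rw [huv, mul_comm]) hu)
    · exact Or.inr (key u v huv (by omega))

/-- swap as ring equiv -/
def swapEquiv : R[X][Y] ≃+* R[X][Y] :=
  RingEquiv.ofRingHom swapHom swapHom
    (RingHom.ext swapHom_swapHom) (RingHom.ext swapHom_swapHom)

end

noncomputable section
open scoped Polynomial.Bivariate
variable {K : Type*} [Field K]

theorem primitive_aux {N D : K[X]} (h : IsCoprime N D) (hD : D ≠ 0)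
    (hnb : ¬(N.natDegree = 0 ∧ D.natDegree = 0)) :
    (N.map Polynomial.C - Polynomial.C Polynomial.X * D.map Polynomial.C : K[X][Y]).IsPrimitive := by
  intro r hr
  rw [C_dvd_iff_dvd_coeff] at hr
  have hcoeff : ∀ i, (N.map Polynomial.C - Polynomial.C Polynomial.X * D.map
      Polynomial.C : K[X][Y]).coeff i
      = Polynomial.C (N.coeff i) - Polynomial.X * Polynomial.C (D.coeff i) := by
    intro i
    simp [coeff_map, coeff_C_mul]
  simp only [hcoeff] at hr
  -- the coefficient at i₀ := D.natDegree is nonzero of degree 1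
  set i₀ := D.natDegree with hi₀
  have hD0 : D.coeff i₀ ≠ 0 := by
    have := Polynomial.leadingCoeff_ne_zero.mpr hD
    rwa [Polynomial.leadingCoeff] at this
  have hgnd : (Polynomial.C (N.coeff i₀) - Polynomial.X * Polynomial.C (D.coeff i₀)).natDegree
      = 1 := by
    have : Polynomial.C (N.coeff i₀) - Polynomial.X * Polynomial.C (D.coeff i₀)
        = Polynomial.C (-(D.coeff i₀)) * Polynomial.X + Polynomial.C (N.coeff i₀) := by
      rw [map_neg]; ring
    rw [this]
    exact natDegree_linear (neg_ne_zero.mpr hD0)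
  have hg0 : (Polynomial.C (N.coeff i₀) - Polynomial.X * Polynomial.C (D.coeff i₀)) ≠ 0 := by
    intro hz
    rw [hz] at hgnd
    simp at hgnd
  have hr0 : r ≠ 0 := by
    rintro rfl
    exact hg0 (zero_dvd_iff.mp (hr i₀))
  have hrdeg : r.natDegree ≤ 1 := hgnd ▸ natDegree_le_of_dvd (hr i₀) hg0
  rcases Nat.lt_or_ge r.natDegree 1 with hr1 | hr1
  · -- r is a nonzero constant, hence a unit
    have hrd0 : r.natDegree = 0 := by omega
    rw [eq_C_of_natDegree_eq_zero hrd0, isUnit_C]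
    refine isUnit_iff_ne_zero.mpr fun hc => hr0 ?_
    rw [eq_C_of_natDegree_eq_zero hrd0, hc, map_zero]
  · exfalso
    have hrdeg1 : r.natDegree = 1 := le_antisymm hrdeg hr1
    have hlc : r.coeff 1 ≠ 0 := by
      have := Polynomial.leadingCoeff_ne_zero.mpr hr0
      rwa [leadingCoeff, hrdeg1] at this
    set a := -(r.coeff 0) / (r.coeff 1) with ha
    have hroot : r.eval a = 0 := by
      conv_lhs => rw [eq_X_add_C_of_natDegree_le_one hrdeg]
      simp only [eval_add, eval_mul, eval_C, eval_X, ha]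
      field_simp
      ring
    have hNa : ∀ i, N.coeff i = a * D.coeff i := by
      intro i
      obtain ⟨t, ht⟩ := hr i
      have := congrArg (Polynomial.eval a) ht
      simp only [eval_sub, eval_mul, eval_C, eval_X, hroot, zero_mul] at this
      linear_combination this
    have hND : N = Polynomial.C a * D := by
      ext i
      simp [hNa i, coeff_C_mul]
    have hDu : IsUnit D := h.isUnit_of_dvd' ⟨Polynomial.C a, by rw [hND, mul_comm]⟩ dvd_rfl
    have hDdeg : D.natDegree = 0 := natDegree_eq_zero_of_isUnit hDu
    have hNdeg : N.natDegree = 0 := by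
      rw [hND]
      exact Nat.le_zero.mp ((natDegree_C_mul_le _ _).trans (le_of_eq hDdeg))
    exact hnb ⟨hNdeg, hDdeg⟩

theorem coeffQ (N D : K[X]) (i : ℕ) :
    (N.map Polynomial.C - Polynomial.C Polynomial.X * D.map Polynomial.C : K[X][Y]).coeff i
      = Polynomial.C (N.coeff i) - Polynomial.X * Polynomial.C (D.coeff i) := by
  simp [coeff_map, coeff_C_mul]

theorem mobius (σ : RatFunc K ≃ₐ[K] RatFunc K) :
    (σ RatFunc.X).num.natDegree ≤ 1 ∧ (σ RatFunc.X).denom.natDegree ≤ 1 := by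
  set f : RatFunc K := σ RatFunc.X with hf
  set N := f.num with hN
  set D := f.denom with hD
  have hD0 : D ≠ 0 := f.denom_ne_zero
  have hcop : IsCoprime N D := f.isCoprime_num_denom
  -- `f` is not a constant
  have hfK : ∀ k : K, f ≠ algebraMap K (RatFunc K) k := by
    intro k hk
    have : RatFunc.X = algebraMap K (RatFunc K) k := by
      have := σ.injective (a₁ := RatFunc.X) (a₂ := algebraMap K (RatFunc K) k)
      exact this (by rw [← hf, hk, AlgEquiv.commutes])
    rw [RatFunc.algebraMap_eq_C] at this
    have h2 := congrArg RatFunc.num this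
    rw [RatFunc.num_X] at h2
    rw [← RatFunc.algebraMap_C, RatFunc.num_algebraMap] at h2
    exact X_ne_C k h2
  have hnb : ¬(N.natDegree = 0 ∧ D.natDegree = 0) := by
    rintro ⟨h1, h2⟩
    refine hfK (N.coeff 0 / D.coeff 0) ?_
    rw [← f.num_div_denom, ← hN, ← hD, eq_C_of_natDegree_eq_zero h1, eq_C_of_natDegree_eq_zero h2,
      RatFunc.algebraMap_C, RatFunc.algebraMap_C, RatFunc.algebraMap_eq_C, map_div₀]
    simp
  -- the bivariate polynomial and its avatars
  set Q' : K[X][Y] := Polynomial.C N - Polynomial.C D * Polynomial.X with hQ'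
  set Q : K[X][Y] := swapHom Q' with hQ
  have hQform : Q = N.map Polynomial.C - Polynomial.C Polynomial.X * D.map Polynomial.C := by
    rw [hQ, hQ', map_sub, map_mul, swapHom_C, swapHom_C, swapHom_X, mul_comm]
  have hQ'irr : Irreducible Q' := linear_irreducible hcop hD0
  have hQirr : Irreducible Q := hQ'irr.map (swapEquiv (R := K))
  have hQprim : Q.IsPrimitive := hQform ▸ primitive_aux hcop hD0 hnb
  have hQ0irr : Irreducible (Q.map (algebraMap K[X] (RatFunc K))) := by
    letI := Classical.decEq K
    exact (hQprim.irreducible_iff_irreducible_map_fraction_map).mp hQirr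
  set P : (RatFunc K)[X] :=
    (Q.map (algebraMap K[X] (RatFunc K))).map (σ : RatFunc K →+* RatFunc K) with hP
  have hPirr : Irreducible P := by
    have : P = (mapEquiv σ.toRingEquiv) (Q.map (algebraMap K[X] (RatFunc K))) := rfl
    rw [this]
    exact hQ0irr.map _
  -- compute `P`
  have hθC : ∀ a : K, σ (algebraMap K[X] (RatFunc K) (Polynomial.C a))
      = algebraMap K (RatFunc K) a := by
    intro a
    rw [RatFunc.algebraMap_C, ← RatFunc.algebraMap_eq_C, AlgEquiv.commutes]
  have hmapND : ∀ p : K[X], Polynomial.map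
      ((σ : RatFunc K →+* RatFunc K).comp ((algebraMap K[X] (RatFunc K)).comp
        (Polynomial.C : K →+* K[X]))) p = p.map (algebraMap K (RatFunc K)) := by
    intro p
    congr 1
    refine RingHom.ext fun a => ?_
    simpa using hθC a
  have hσX : (σ : RatFunc K →+* RatFunc K) ((algebraMap K[X] (RatFunc K)) Polynomial.X)
      = f := by
    rw [RatFunc.algebraMap_X]
    rfl
  have hPform : P = N.map (algebraMap K (RatFunc K))
      - Polynomial.C f * D.map (algebraMap K (RatFunc K)) := by
    rw [hP, hQform]
    simp only [Polynomial.map_sub, Polynomial.map_mul, Polynomial.map_map, Polynomial.map_C]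
    rw [hmapND, hmapND, hσX]
  have heval2 : ∀ p : K[X], eval₂ (algebraMap K (RatFunc K)) RatFunc.X p
      = algebraMap K[X] (RatFunc K) p := by
    intro p
    have h3 : (eval₂RingHom (algebraMap K (RatFunc K)) RatFunc.X : K[X] →+* RatFunc K)
        = (algebraMap K[X] (RatFunc K) : K[X] →+* RatFunc K) := by
      apply Polynomial.ringHom_ext
      · intro a
        rw [coe_eval₂RingHom, eval₂_C, RatFunc.algebraMap_C, RatFunc.algebraMap_eq_C]
      · rw [coe_eval₂RingHom, eval₂_X, RatFunc.algebraMap_X]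
    exact DFunLike.congr_fun h3 p
  have hfd : (algebraMap K[X] (RatFunc K)) N = f * (algebraMap K[X] (RatFunc K)) D := by
    conv_rhs => rw [← f.num_div_denom]
    rw [div_mul_cancel₀ _ (RatFunc.algebraMap_ne_zero f.denom_ne_zero)]
  have hPeval : P.eval RatFunc.X = 0 := by
    rw [hPform, eval_sub, eval_mul, eval_C, eval_map, eval_map, heval2, heval2, hfd, sub_self]
  have hPdeg : P.degree = 1 :=
    degree_eq_one_of_irreducible_of_root hPirr hPeval
  have hQdeg : Q.natDegree = 1 := by
    have : Q.degree = 1 := by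
      rw [← hPdeg, hP, degree_map_eq_of_injective σ.injective,
        degree_map_eq_of_injective (RatFunc.algebraMap_injective K)]
    exact natDegree_eq_of_degree_eq_some this
  have hQcoeff : ∀ i, (N.coeff i ≠ 0 ∨ D.coeff i ≠ 0) → Q.coeff i ≠ 0 := by
    intro i hi hzero
    rw [hQform, coeffQ] at hzero
    have h0 := congrArg (fun p => Polynomial.coeff p 0) hzero
    have h1 := congrArg (fun p => Polynomial.coeff p 1) hzero
    simp at h0 h1
    rcases hi with hi | hi
    · exact hi h0
    · exact hi h1
  constructor
  · rcases eq_or_ne N 0 with h | h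
    · rw [h]; simp
    · have := le_natDegree_of_ne_zero (hQcoeff N.natDegree
        (Or.inl (Polynomial.leadingCoeff_ne_zero.mpr h)))
      omega
  · have := le_natDegree_of_ne_zero (hQcoeff D.natDegree
      (Or.inr (Polynomial.leadingCoeff_ne_zero.mpr hD0)))
    omega

theorem algEquiv_ext {σ τ : RatFunc K ≃ₐ[K] RatFunc K} (h : σ RatFunc.X = τ RatFunc.X) :
    σ = τ := by
  have key : ((σ : RatFunc K →+* RatFunc K).comp (algebraMap K[X] (RatFunc K)))
      = ((τ : RatFunc K →+* RatFunc K).comp (algebraMap K[X] (RatFunc K))) := by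
    apply Polynomial.ringHom_ext
    · intro a
      simp only [RingHom.comp_apply, RatFunc.algebraMap_C, ← RatFunc.algebraMap_eq_C]
      rw [show (σ : RatFunc K →+* RatFunc K) (algebraMap K (RatFunc K) a) = σ (algebraMap K (RatFunc K) a) from rfl,
        show (τ : RatFunc K →+* RatFunc K) (algebraMap K (RatFunc K) a) = τ (algebraMap K (RatFunc K) a) from rfl,
        AlgEquiv.commutes, AlgEquiv.commutes]
    · simp only [RingHom.comp_apply, RatFunc.algebraMap_X]
      exact h
  ext z
  conv_lhs => rw [← z.num_div_denom]
  conv_rhs => rw [← z.num_div_denom]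
  rw [map_div₀, map_div₀]
  rw [show σ (algebraMap K[X] (RatFunc K) z.num) =
    ((σ : RatFunc K →+* RatFunc K).comp (algebraMap K[X] (RatFunc K))) z.num from rfl]
  rw [show σ (algebraMap K[X] (RatFunc K) z.denom) =
    ((σ : RatFunc K →+* RatFunc K).comp (algebraMap K[X] (RatFunc K))) z.denom from rfl]
  rw [show τ (algebraMap K[X] (RatFunc K) z.num) =
    ((τ : RatFunc K →+* RatFunc K).comp (algebraMap K[X] (RatFunc K))) z.num from rfl]
  rw [show τ (algebraMap K[X] (RatFunc K) z.denom) =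
    ((τ : RatFunc K →+* RatFunc K).comp (algebraMap K[X] (RatFunc K))) z.denom from rfl]
  rw [key]

theorem aut_finite [Finite K] : Finite (RatFunc K ≃ₐ[K] RatFunc K) := by
  set Φ : K × K × K × K → RatFunc K := fun q =>
    (RatFunc.C q.1 * RatFunc.X + RatFunc.C q.2.1) /
      (RatFunc.C q.2.2.1 * RatFunc.X + RatFunc.C q.2.2.2) with hΦ
  have hmem : ∀ σ : RatFunc K ≃ₐ[K] RatFunc K, σ RatFunc.X ∈ Set.range Φ := by
    intro σ
    obtain ⟨h1, h2⟩ := mobius σ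
    refine ⟨((σ RatFunc.X).num.coeff 1, (σ RatFunc.X).num.coeff 0,
      (σ RatFunc.X).denom.coeff 1, (σ RatFunc.X).denom.coeff 0), ?_⟩
    rw [hΦ]
    simp only
    conv_rhs => rw [← (σ RatFunc.X).num_div_denom]
    congr 1
    · conv_rhs => rw [eq_X_add_C_of_natDegree_le_one h1]
      rw [map_add, map_mul, RatFunc.algebraMap_C, RatFunc.algebraMap_C, RatFunc.algebraMap_X]
    · conv_rhs => rw [eq_X_add_C_of_natDegree_le_one h2]
      rw [map_add, map_mul, RatFunc.algebraMap_C, RatFunc.algebraMap_C, RatFunc.algebraMap_X]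
  have : Finite (Set.range Φ) := Set.finite_range Φ
  refine Finite.of_injective (fun σ => (⟨σ RatFunc.X, hmem σ⟩ : Set.range Φ)) ?_
  intro σ τ hst
  exact algEquiv_ext (congrArg Subtype.val hst)

set_option synthInstance.maxHeartbeats 400000 in
theorem forward_aux [Finite K]
    (h : IntermediateField.fixedField (⊤ : Subgroup (RatFunc K ≃ₐ[K] RatFunc K)) = ⊥) :
    False := by
  have hG : Finite (RatFunc K ≃ₐ[K] RatFunc K) := aut_finite
  have hfd : FiniteDimensional
      (FixedPoints.subfield (RatFunc K ≃ₐ[K] RatFunc K) (RatFunc K)) (RatFunc K) :=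
    inferInstance
  have hrange : ∀ s : FixedPoints.subfield (RatFunc K ≃ₐ[K] RatFunc K) (RatFunc K),
      (s : RatFunc K) ∈ Set.range (algebraMap K (RatFunc K)) := by
    intro s
    have hmem : (s : RatFunc K) ∈ IntermediateField.fixedField
        (⊤ : Subgroup (RatFunc K ≃ₐ[K] RatFunc K)) := by
      intro g
      exact s.2 g.1
    rw [h, IntermediateField.mem_bot] at hmem
    exact hmem
  have hKfd : Module.Finite K (RatFunc K) := by
    obtain ⟨t, ht⟩ := (Module.finite_def.mp hfd)
    rw [Module.finite_def, Submodule.fg_def]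
    refine ⟨(t : Set (RatFunc K)), t.finite_toSet, ?_⟩
    have key : ∀ x, x ∈ Submodule.span
        (FixedPoints.subfield (RatFunc K ≃ₐ[K] RatFunc K) (RatFunc K)) (t : Set (RatFunc K)) →
        x ∈ Submodule.span K (t : Set (RatFunc K)) := by
      intro x hx
      induction hx using Submodule.span_induction with
      | mem y hy => exact Submodule.subset_span hy
      | zero => exact Submodule.zero_mem _
      | add y z _ _ hy hz => exact Submodule.add_mem _ hy hz
      | smul c y _ hy =>
        obtain ⟨k, hk⟩ := hrange c
        have h1 : c • y = (c : RatFunc K) * y := rfl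
        rw [h1, ← hk, ← Algebra.smul_def]
        exact Submodule.smul_mem _ _ hy
    rw [eq_top_iff]
    intro x _
    exact key x (ht ▸ Submodule.mem_top)
  have halg : Algebra.IsAlgebraic K (RatFunc K) := Algebra.IsAlgebraic.of_finite K _
  have htr : Transcendental K (RatFunc.X : RatFunc K) := by
    rw [← RatFunc.algebraMap_X]
    exact (transcendental_algebraMap_iff (RatFunc.algebraMap_injective K)).mpr
      (Polynomial.transcendental_X K)
  exact htr (halg.isAlgebraic RatFunc.X)

end

/-- The extension `K ⊆ K(x)` is Galois (the fixed field of `Aut_K K(x)` is `K`)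
if and only if `K` is infinite. -/
theorem ratFunc_galois_iff_infinite (K : Type*) [Field K] :
    IntermediateField.fixedField (⊤ : Subgroup (RatFunc K ≃ₐ[K] RatFunc K)) = ⊥ ↔
      Infinite K := by
  constructor
  · intro h
    rcases finite_or_infinite K with hK | hK
    · exact (forward_aux h).elim
    · exact hK
  · intro hK
    refine le_antisymm (fun x hx => ?_) bot_le
    exact fixed_of_infinite x fun r => hx ⟨laurentEquiv r, Subgroup.mem_top _⟩
end
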